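/- arXiv:0706.0854 — 5 statements merged into one kernel-verified Lean document; each statement's English description precedes it below -/
import Mathlib

section
/- Let n ≥ 3, t ∈ ℂ, t ≠ 0, and A = diag(0,…,0,t,t) ∈ M_n(ℂ). Then for every B ∈ M_n(ℂ) and h ∈ ℂ: the coefficient of h in σ_1(A+hB) is Σ_{j=1}^n b_{jj}; the coefficient of h in σ_2(A+hB) is 2t Σ_{j=1}^{n−2} b_{jj} + t(b_{n−1,n−1} + b_{nn}); the coefficient of h in σ_3(A+hB) is t² Σ_{j=1}^{n−2} b_{jj}. In particular the linear relation (dσ_3)_A = t (dσ_2)_A − t² (dσ_1)_A holds between these differentials. -/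
/-- `sigma j M`: the `j`-th elementary symmetric function of the eigenvalues of `M`. -/
noncomputable def sigma {n : ℕ} (j : ℕ) (M : Matrix (Fin n) (Fin n) ℂ) : ℂ :=
  (-1 : ℂ) ^ j * M.charpoly.coeff (n - j)

/-!
Expanding `det (M + h • N)` multilinearly in the rows, its coefficient of `h` is the sum over `i`
of `det M` with row `i` replaced by row `i` of `N`. Applied to `M = X - A`, `N = -B` with
`A = diagonal d`, this gives `(dσ_j)_A B = ∑ i, B i i * e_{j-1}(d without d i)`, read off from the coefficients of
`∏_{l ≠ i} (X - d l)`. For `d = (0,…,0,t,t)` that product is `X^(n-3) (X - t)^2` or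
`X^(n-3) X (X - t)` according as `i < n - 2` or not, whence the weights `1, 2t, t²` and `1, t, 0`.
-/

open Polynomial Matrix Finset

namespace Matrix

variable {m R : Type*} [Fintype m] [DecidableEq m] [CommRing R]

theorem det_updateRow_diagonal (d : m → R) (i : m) (v : m → R) :
    ((diagonal d).updateRow i v).det = v i * ∏ k ∈ univ.erase i, d k := by
  have hv : v = Pi.single i (v i) + (v - Pi.single i (v i)) := by abel
  have hzero : ((diagonal d).updateRow i (v - Pi.single i (v i))).det = 0 := by
    refine det_eq_zero_of_column_eq_zero i fun k => ?_
    rcases eq_or_ne k i with rfl | hk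
    · simp
    · simp [updateRow_ne hk, diagonal_apply_ne _ hk]
  conv_lhs => rw [hv]
  rw [det_updateRow_add, hzero, add_zero, diagonal_updateRow_single, det_diagonal,
    ← mul_prod_erase _ _ (mem_univ i), Function.update_self]
  exact congrArg (v i * ·) <| prod_congr rfl fun k hk =>
    Function.update_of_ne (ne_of_mem_erase hk) (v i) d

theorem det_add_smul_eq_sum_piecewise (M N : Matrix m m R) (r : R) :
    (M + r • N).det = ∑ S : Finset m, r ^ #S * (of (S.piecewise N M)).det := by
  rw [add_comm]
  change detRowAlternating ((fun k => r • N k) + fun k => M k) = _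
  rw [AlternatingMap.map_add_univ]
  refine sum_congr rfl fun S _ => ?_
  have hsmul := (detRowAlternating : (m → R) [⋀^m]→ₗ[R] R).toMultilinearMap.map_piecewise_smul
    (fun _ => r) (S.piecewise N M) S
  have hpw : S.piecewise (fun k => r • N k) M = S.piecewise (fun k => r • S.piecewise N M k)
      (S.piecewise N M) := by
    ext k : 1
    by_cases hk : k ∈ S <;> simp only [Finset.piecewise, hk, if_true, if_false]
  rw [hpw]
  exact hsmul.trans (by rw [prod_const, smul_eq_mul]; rfl)

theorem charmatrix_add_smul (A B : Matrix m m R) (r : R) :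
    charmatrix (A + r • B) = charmatrix A + r • -B.map C := by
  ext i j
  by_cases hij : i = j
  · subst hij; simp [smul_eq_C_mul]; ring
  · simp [hij, smul_eq_C_mul]; ring

end Matrix

section Derivative

variable {m 𝕜 R : Type*} [Fintype m] [NontriviallyNormedField 𝕜]

theorem hasDerivAt_sum_pow_card_mul (c : Finset m → 𝕜) :
    HasDerivAt (fun h : 𝕜 => ∑ S : Finset m, h ^ #S * c S) (∑ i, c {i}) 0 := by
  refine (HasDerivAt.fun_sum fun S _ => (hasDerivAt_pow #S (0 : 𝕜)).mul_const (c S)).congr_deriv ?_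
  have hterm (S : Finset m) : (#S * 0 ^ (#S - 1) : 𝕜) * c S = if #S = 1 then c S else 0 := by
    match #S with
    | 0 => simp
    | 1 => simp
    | k + 2 => simp [pow_succ]
  rw [sum_congr rfl fun S _ => hterm S, ← sum_filter, ← powerset_univ, ← powersetCard_eq_filter,
    powersetCard_one, sum_map]
  rfl

variable [DecidableEq m]

theorem hasDerivAt_det_add_smul [CommRing R] [Algebra 𝕜 R] (ℓ : R →ₗ[𝕜] 𝕜)
    (M N : Matrix m m R) :
    HasDerivAt (fun h : 𝕜 => ℓ (M + h • N).det) (∑ i, ℓ (M.updateRow i (N i)).det) 0 := by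
  have hexpand : (fun h : 𝕜 => ℓ (M + h • N).det) =
      fun h => ∑ S : Finset m, h ^ #S * ℓ (of (S.piecewise N M)).det := by
    funext h
    rw [← algebraMap_smul R h N, det_add_smul_eq_sum_piecewise, map_sum]
    refine sum_congr rfl fun S _ => ?_
    rw [← map_pow, ← Algebra.smul_def, map_smul, smul_eq_mul]
  rw [hexpand]
  convert hasDerivAt_sum_pow_card_mul fun S => ℓ (of (S.piecewise N M)).det using 5 with i
  exact (congrArg of (piecewise_singleton (f := fun k => N k) (g := fun k => M k) i)).symm

theorem hasDerivAt_charpoly_coeff_add_smul (A B : Matrix m m 𝕜) (k : ℕ) :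
    HasDerivAt (fun h : 𝕜 => (A + h • B).charpoly.coeff k)
      (∑ i, ((charmatrix A).updateRow i ((-B.map C) i)).det.coeff k) 0 := by
  simpa only [charpoly, charmatrix_add_smul, lcoeff_apply] using
    hasDerivAt_det_add_smul (lcoeff 𝕜 k) (charmatrix A) (-B.map C)

theorem hasDerivAt_charpoly_coeff_diagonal_add_smul (d : m → 𝕜) (B : Matrix m m 𝕜) (k : ℕ) :
    HasDerivAt (fun h : 𝕜 => (diagonal d + h • B).charpoly.coeff k)
      (-∑ i, B i i * (∏ l ∈ univ.erase i, (X - C (d l))).coeff k) 0 := by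
  convert hasDerivAt_charpoly_coeff_add_smul (diagonal d) B k using 1
  simp [charmatrix_diagonal, det_updateRow_diagonal, coeff_C_mul, ← sum_neg_distrib]

end Derivative

theorem prod_erase_X_sub_C_step {K : Type*} [Field K] {n : ℕ} (hn : 3 ≤ n) (t : K) (i : Fin n) :
    ∏ l ∈ univ.erase i, (X - C (if (l : ℕ) < n - 2 then 0 else t)) =
      X ^ (n - 3) * if (i : ℕ) < n - 2 then (X - C t) ^ 2 else X * (X - C t) := by
  have hlow : #{l : Fin n | (l : ℕ) < n - 2} = n - 2 := by
    rw [Fin.card_filter_val_lt]; omega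
  have hhigh : #{l : Fin n | ¬ (l : ℕ) < n - 2} = 2 := by
    have := card_filter_add_card_filter_not (s := univ) fun l : Fin n => (l : ℕ) < n - 2
    rw [card_univ, Fintype.card_fin] at this
    omega
  have hall : ∏ l : Fin n, (X - C (if (l : ℕ) < n - 2 then 0 else t)) =
      X ^ (n - 3 + 1) * (X - C t) ^ 2 := by
    simp only [apply_ite C, map_zero, sub_zero, apply_ite (HSub.hSub (X : K[X]))]
    rw [prod_ite, prod_const, prod_const, hlow, hhigh, show n - 3 + 1 = n - 2 by omega]
  rw [← mul_prod_erase univ _ (mem_univ i)] at hall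
  split_ifs at hall ⊢ with hi
  · rw [map_zero, sub_zero] at hall
    exact mul_left_cancel₀ X_ne_zero (hall.trans (by ring))
  · exact mul_left_cancel₀ (X_sub_C_ne_zero t) (hall.trans (by ring))

theorem Fin.sum_filter_not_lt_sub_two {M : Type*} [AddCommMonoid M] {n : ℕ} (hn : 2 ≤ n)
    (f : Fin n → M) :
    ∑ i ∈ univ.filter (fun i : Fin n => ¬ (i : ℕ) < n - 2), f i =
      f ⟨n - 2, by omega⟩ + f ⟨n - 1, by omega⟩ := by
  have hlast : univ.filter (fun i : Fin n => ¬ (i : ℕ) < n - 2) =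
      {⟨n - 2, by omega⟩, ⟨n - 1, by omega⟩} := by
    ext i; simp [Fin.ext_iff]; omega
  rw [hlast, sum_pair (by simp [Fin.ext_iff]; omega)]

theorem deriv_sigma_diagonal_add_smul {n : ℕ} (d : Fin n → ℂ) (B : Matrix (Fin n) (Fin n) ℂ)
    (j : ℕ) :
    deriv (fun h : ℂ => sigma j (diagonal d + h • B)) 0 =
      ∑ i, B i i * ((-1) ^ (j + 1) * (∏ l ∈ univ.erase i, (X - C (d l))).coeff (n - j)) := by
  rw [show (fun h : ℂ => sigma j (diagonal d + h • B)) =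
      fun h => (-1) ^ j * (diagonal d + h • B).charpoly.coeff (n - j) from rfl,
    ((hasDerivAt_charpoly_coeff_diagonal_add_smul d B (n - j)).const_mul _).deriv, mul_neg,
    mul_sum, ← sum_neg_distrib]
  refine sum_congr rfl fun i _ => ?_
  ring

theorem deriv_sigma_step_add_smul {n : ℕ} (hn : 3 ≤ n) (t : ℂ) (B : Matrix (Fin n) (Fin n) ℂ)
    {j : ℕ} (hj : j ≤ 3) {a b : ℂ} (ha : (-1) ^ (j + 1) * ((X - C t) ^ 2).coeff (3 - j) = a)
    (hb : (-1) ^ (j + 1) * (X * (X - C t)).coeff (3 - j) = b) :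
    deriv (fun h : ℂ =>
        sigma j (diagonal (fun l : Fin n => if (l : ℕ) < n - 2 then 0 else t) + h • B)) 0 =
      a * ∑ i ∈ univ.filter (fun i : Fin n => (i : ℕ) < n - 2), B i i +
        b * (B ⟨n - 2, by omega⟩ ⟨n - 2, by omega⟩ + B ⟨n - 1, by omega⟩ ⟨n - 1, by omega⟩) := by
  rw [deriv_sigma_diagonal_add_smul]
  simp_rw [prod_erase_X_sub_C_step hn, show n - j = 3 - j + (n - 3) by omega, coeff_X_pow_mul,
    apply_ite (coeff · (3 - j)), mul_ite, ha, hb, sum_ite, ← sum_mul,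
    Fin.sum_filter_not_lt_sub_two (by omega : 2 ≤ n)]
  ring

theorem diff_sigma_at_diag_tt (n : ℕ) (hn : 3 ≤ n) (t : ℂ)
    (A : Matrix (Fin n) (Fin n) ℂ)
    (hA : A = Matrix.diagonal (fun j : Fin n => if (j : ℕ) < n - 2 then 0 else t))
    (B : Matrix (Fin n) (Fin n) ℂ) :
    deriv (fun h : ℂ => sigma 1 (A + h • B)) 0 = ∑ j : Fin n, B j j ∧
    deriv (fun h : ℂ => sigma 2 (A + h • B)) 0 =
      2 * t * (∑ j ∈ Finset.univ.filter (fun j : Fin n => (j : ℕ) < n - 2), B j j) +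
        t * (B ⟨n - 2, by omega⟩ ⟨n - 2, by omega⟩ + B ⟨n - 1, by omega⟩ ⟨n - 1, by omega⟩) ∧
    deriv (fun h : ℂ => sigma 3 (A + h • B)) 0 =
      t ^ 2 * (∑ j ∈ Finset.univ.filter (fun j : Fin n => (j : ℕ) < n - 2), B j j) ∧
    deriv (fun h : ℂ => sigma 3 (A + h • B)) 0 =
      t * deriv (fun h : ℂ => sigma 2 (A + h • B)) 0 -
        t ^ 2 * deriv (fun h : ℂ => sigma 1 (A + h • B)) 0 := by
  subst hA
  have hsq (k : ℕ) : (((X : ℂ[X]) - C t) ^ 2).coeff k = (-t) ^ (2 - k) * (Nat.choose 2 k) := by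
    rw [sub_eq_add_neg, ← C_neg, coeff_X_add_C_pow]
  have d1 := deriv_sigma_step_add_smul (j := 1) (a := 1) (b := 1) hn t B (by norm_num)
    (by norm_num [hsq]) (by norm_num)
  have d2 := deriv_sigma_step_add_smul (j := 2) (a := 2 * t) (b := t) hn t B (by norm_num)
    (by norm_num [hsq, mul_comm]) (by norm_num)
  have d3 := deriv_sigma_step_add_smul (j := 3) (a := t ^ 2) (b := 0) hn t B (by norm_num)
    (by norm_num [hsq]) (by norm_num)
  have htrace := sum_filter_add_sum_filter_not univ (fun i : Fin n => (i : ℕ) < n - 2)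
    fun i => B i i
  rw [Fin.sum_filter_not_lt_sub_two (by omega)] at htrace
  refine ⟨by rw [d1, ← htrace]; ring, d2, by rw [d3]; ring, by rw [d1, d2, d3]; ring⟩
end

section
/- For B ∈ M_n(ℂ) the following are equivalent: (a) B is nilpotent; (b) there is an entire map φ : ℂ → Ω_n with φ(0) = 0 and φ′(0) = B. Moreover in case (a) the map φ(ζ) = ζB works, since ζB has spectral radius 0 for every ζ. -/
open Filter Topology

/-! Along an entire curve in the spectral ball the coefficients of the characteristic polynomial
are bounded entire functions, hence constant by Liouville: every `φ ζ` has the characteristic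
polynomial `X ^ n` of `φ 0 = 0`, so `φ ζ ^ n = 0`. Since `B` is the limit of `ζ⁻¹ • φ ζ` as
`ζ → 0` and `(ζ⁻¹ • φ ζ) ^ n = 0`, also `B ^ n = 0`. -/

lemma IsNilpotent.eq_zero_of_mem_spectrum {𝕜 A : Type*} [Field 𝕜] [Ring A] [Algebra 𝕜 A] {a : A}
    (ha : IsNilpotent a) {μ : 𝕜} (hμ : μ ∈ spectrum 𝕜 a) : μ = 0 := by
  by_contra hμ0
  apply spectrum.mem_iff.mp hμ
  have hunit : IsUnit (algebraMap 𝕜 A μ) := (isUnit_iff_ne_zero.mpr hμ0).map _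
  simpa [sub_eq_add_neg] using
    ha.neg.isUnit_add_left_of_commute hunit (Algebra.commute_algebraMap_left μ (-a)).symm

lemma pow_eq_zero_of_tendsto_smul {𝕜 A ι : Type*} [CommSemiring 𝕜] [Semiring A] [Algebra 𝕜 A]
    [TopologicalSpace A] [ContinuousMul A] [T2Space A] {l : Filter ι} [l.NeBot]
    {c : ι → 𝕜} {φ : ι → A} {b : A} {k : ℕ}
    (hb : Tendsto (fun x => c x • φ x) l (𝓝 b)) (hφ : ∀ x, φ x ^ k = 0) : b ^ k = 0 :=
  tendsto_nhds_unique ((hb.pow k).congr fun x => by rw [smul_pow, hφ x, smul_zero])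
    tendsto_const_nhds

open Polynomial

namespace Matrix

variable {ι : Type*} [Fintype ι] [DecidableEq ι]

lemma norm_coeff_charpoly_le {𝕜 : Type*} [NormedField 𝕜] [IsAlgClosed 𝕜] (M : Matrix ι ι 𝕜)
    {r : ℝ} (hM : ∀ μ ∈ spectrum 𝕜 M, ‖μ‖ ≤ r) (i : ℕ) :
    ‖M.charpoly.coeff i‖ ≤ r ^ (Fintype.card ι - i) * (Fintype.card ι).choose i := by
  simpa [charpoly_natDegree_eq_dim] using
    coeff_le_of_roots_le (f := RingHom.id 𝕜) i M.charpoly_monic (IsAlgClosed.splits _)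
      fun μ hμ => hM μ (mem_spectrum_of_isRoot_charpoly (isRoot_of_mem_roots (by simpa using hμ)))

lemma _root_.AnalyticAt.charpoly_coeff {𝕜 E : Type*} [NontriviallyNormedField 𝕜]
    [NormedAddCommGroup E] [NormedSpace 𝕜 E] {φ : E → Matrix ι ι 𝕜} {z : E}
    (hφ : ∀ i j, AnalyticAt 𝕜 (fun x => φ x i j) z) (k : ℕ) :
    AnalyticAt 𝕜 (fun x => (φ x).charpoly.coeff k) z := by
  have h := AnalyticAt.aeval_mvPolynomial (f := fun x (p : ι × ι) => φ x p.1 p.2)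
    (fun p => hφ p.1 p.2) ((charpoly.univ 𝕜 ι).coeff k)
  simp only [MvPolynomial.aeval_eq_eval₂Hom, charpoly.univ_coeff_eval₂Hom] at h
  exact h

lemma charpoly_eq_of_differentiable_of_spectrum_bounded {φ : ℂ → Matrix ι ι ℂ}
    (hφ : ∀ i j, Differentiable ℂ fun ζ => φ ζ i j) {r : ℝ}
    (hr : ∀ ζ, ∀ μ ∈ spectrum ℂ (φ ζ), ‖μ‖ ≤ r) (ζ w : ℂ) :
    (φ ζ).charpoly = (φ w).charpoly := by
  ext k
  have hdiff : Differentiable ℂ fun ζ => (φ ζ).charpoly.coeff k := fun ζ =>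
    (AnalyticAt.charpoly_coeff (fun i j => (hφ i j).analyticAt ζ) k).differentiableAt
  refine hdiff.apply_eq_apply_of_bounded ?_ ζ w
  rw [isBounded_iff_forall_norm_le]
  exact ⟨_, Set.forall_mem_range.mpr fun ζ => norm_coeff_charpoly_le _ (hr ζ) k⟩

lemma tendsto_inv_smul_of_differentiableAt {𝕜 : Type*} [NontriviallyNormedField 𝕜]
    {m n : Type*} {φ : 𝕜 → Matrix m n 𝕜} (hφ : ∀ i j, DifferentiableAt 𝕜 (fun ζ => φ ζ i j) 0)
    (h0 : φ 0 = 0) :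
    Tendsto (fun ζ => ζ⁻¹ • φ ζ) (𝓝[≠] 0) (𝓝 (of fun i j => deriv (fun ζ => φ ζ i j) 0)) := by
  refine tendsto_pi_nhds.mpr fun i => tendsto_pi_nhds.mpr fun j => ?_
  refine (hasDerivAt_iff_tendsto_slope.mp (hφ i j).hasDerivAt).congr fun ζ => ?_
  simp [slope_def_field, h0, div_eq_inv_mul]

end Matrix

open Matrix

theorem nilpotent_iff_entire_curve_at_zero (n : ℕ) (B : Matrix (Fin n) (Fin n) ℂ) :
    (IsNilpotent B ↔
      ∃ φ : ℂ → Matrix (Fin n) (Fin n) ℂ,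
        (∀ i j : Fin n, Differentiable ℂ fun ζ => φ ζ i j) ∧
        (∀ ζ : ℂ, ∀ μ ∈ spectrum ℂ (φ ζ), ‖μ‖ < 1) ∧
        φ 0 = 0 ∧
        (∀ i j : Fin n, deriv (fun ζ => φ ζ i j) 0 = B i j)) ∧
    (IsNilpotent B → ∀ ζ : ℂ, ∀ μ ∈ spectrum ℂ (ζ • B), μ = 0) := by
  have spectrum_smul : IsNilpotent B → ∀ ζ : ℂ, ∀ μ ∈ spectrum ℂ (ζ • B), μ = 0 :=
    fun hB ζ _ hμ => (hB.smul ζ).eq_zero_of_mem_spectrum hμ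
  refine ⟨⟨fun hB => ⟨fun ζ => ζ • B, ?_, ?_, zero_smul _ _, ?_⟩, ?_⟩, spectrum_smul⟩
  · simp
  · intro ζ μ hμ
    simp [spectrum_smul hB ζ μ hμ]
  · simp
  · rintro ⟨φ, hφ, hspec, h0, hderiv⟩
    have charpoly_eq : ∀ ζ, (φ ζ).charpoly = X ^ n := fun ζ => by
      simpa [h0] using charpoly_eq_of_differentiable_of_spectrum_bounded hφ
        (fun ζ μ hμ => (hspec ζ μ hμ).le) ζ 0
    have hB : Tendsto (fun ζ => ζ⁻¹ • φ ζ) (𝓝[≠] 0) (𝓝 B) := by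
      convert tendsto_inv_smul_of_differentiableAt (fun i j => (hφ i j).differentiableAt) h0
      ext i j
      exact (hderiv i j).symm
    exact ⟨n, pow_eq_zero_of_tendsto_smul hB fun ζ => by
      simpa [charpoly_eq ζ] using (φ ζ).aeval_self_charpoly⟩
end

section
/- Let t ∈ ℂ∩𝔻∖{0} and A_t = diag(0,0,t) ∈ Ω_3. For every B ∈ M_3(ℂ) satisfying b_{33} = 0, b_{11} + b_{22} = 0 and b_{11}² + b_{12}b_{21} = 0, there exists an entire map φ : ℂ → Ω_3 with φ(0) = A_t and φ′(0) = B. (Take φ(ζ) = e^{ζY}(A_t + ζX)e^{−ζY} with the decomposition B = X + [Y,A_t].) -/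
/-!
Write `B = X + [Y, A_t]`, where `X` is the upper-left `2 × 2` block of `B` and `Y` is read off the
third row and column of `B` (possible since `t ≠ 0` and `b₃₃ = 0`). Conjugation by invertible
matrices does not change the spectrum, and the spectrum of `A_t + ζ X` is `{0, t}` because the
block `ζ X`, having zero trace and determinant, is nilpotent. Instead of `exp (ζ Y)` we split
`Y = Y₁ + Y₂` into its last column and its last row and conjugate by `(1 + ζ Y₁)(1 + ζ Y₂)`,
whose inverse `(1 - ζ Y₂)(1 - ζ Y₁)` is explicit because `Y₁² = Y₂² = 0`; the derivative of the
curve at `0` is still `X + [Y, A_t] = B`.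
-/

open Matrix

@[simps]
def Units.oneAddOfMulSelfEqZero {R : Type*} [Ring R] (a : R) (ha : a * a = 0) : Rˣ where
  val := 1 + a
  inv := 1 - a
  val_inv := by simp [mul_sub, add_mul, ha]
  inv_val := by simp [sub_mul, mul_add, ha]

section EntrywiseCalculus

variable {𝕜 : Type*} [NontriviallyNormedField 𝕜] {l m n : Type*} [Fintype m]

theorem Matrix.differentiable_entry_mul {A : 𝕜 → Matrix l m 𝕜} {B : 𝕜 → Matrix m n 𝕜}
    (hA : ∀ i j, Differentiable 𝕜 fun ζ => A ζ i j)
    (hB : ∀ i j, Differentiable 𝕜 fun ζ => B ζ i j) (i : l) (j : n) :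
    Differentiable 𝕜 fun ζ => (A ζ * B ζ) i j := by
  simp only [mul_apply]
  exact Differentiable.fun_sum fun k _ => (hA i k).mul (hB k j)

theorem Matrix.hasDerivAt_entry_mul {A : 𝕜 → Matrix l m 𝕜} {B : 𝕜 → Matrix m n 𝕜}
    {A' : Matrix l m 𝕜} {B' : Matrix m n 𝕜} {x : 𝕜}
    (hA : ∀ i j, HasDerivAt (fun ζ => A ζ i j) (A' i j) x)
    (hB : ∀ i j, HasDerivAt (fun ζ => B ζ i j) (B' i j) x) (i : l) (j : n) :
    HasDerivAt (fun ζ => (A ζ * B ζ) i j) ((A' * B x + A x * B') i j) x := by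
  simp only [mul_apply, add_apply, ← Finset.sum_add_distrib]
  exact HasDerivAt.fun_sum fun k _ => (hA i k).fun_mul (hB k j)

theorem Matrix.hasDerivAt_entry_add_smul (C D : Matrix l n 𝕜) (x : 𝕜) (i : l) (j : n) :
    HasDerivAt (fun ζ : 𝕜 => (C + ζ • D) i j) (D i j) x := by
  simpa using ((hasDerivAt_id x).mul_const (D i j)).const_add (C i j)

theorem Matrix.differentiable_entry_add_smul (C D : Matrix l n 𝕜) (i : l) (j : n) :
    Differentiable 𝕜 fun ζ : 𝕜 => (C + ζ • D) i j :=
  fun x => (hasDerivAt_entry_add_smul C D x i j).differentiableAt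

end EntrywiseCalculus

section ConjugationCurve

variable {𝕜 : Type*} {n : Type*} [Fintype n] [DecidableEq n]

def conjCurve [Field 𝕜] (Y₁ Y₂ A X : Matrix n n 𝕜) (ζ : 𝕜) : Matrix n n 𝕜 :=
  (1 + ζ • Y₁) * (1 + ζ • Y₂) * (A + ζ • X) * ((1 - ζ • Y₂) * (1 - ζ • Y₁))

theorem conjCurve_zero [Field 𝕜] (Y₁ Y₂ A X : Matrix n n 𝕜) : conjCurve Y₁ Y₂ A X 0 = A := by
  simp [conjCurve]

theorem spectrum_conjCurve [Field 𝕜] {Y₁ Y₂ : Matrix n n 𝕜} (h₁ : Y₁ * Y₁ = 0)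
    (h₂ : Y₂ * Y₂ = 0) (A X : Matrix n n 𝕜) (ζ : 𝕜) :
    spectrum 𝕜 (conjCurve Y₁ Y₂ A X ζ) = spectrum 𝕜 (A + ζ • X) := by
  have hsq : ∀ Y : Matrix n n 𝕜, Y * Y = 0 → ζ • Y * (ζ • Y) = 0 := fun Y hY => by
    rw [smul_mul_smul_comm, hY, smul_zero]
  let u := Units.oneAddOfMulSelfEqZero _ (hsq Y₁ h₁) * Units.oneAddOfMulSelfEqZero _ (hsq Y₂ h₂)
  have hu : conjCurve Y₁ Y₂ A X ζ = u * (A + ζ • X) * (u⁻¹ : (Matrix n n 𝕜)ˣ) := by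
    simp [conjCurve, u, _root_.mul_inv_rev]
  rw [hu, spectrum.units_conjugate]

variable [NontriviallyNormedField 𝕜]

theorem differentiable_entry_conjCurve (Y₁ Y₂ A X : Matrix n n 𝕜) (i j : n) :
    Differentiable 𝕜 fun ζ => conjCurve Y₁ Y₂ A X ζ i j := by
  have haff : ∀ C D : Matrix n n 𝕜, ∀ i j, Differentiable 𝕜 fun ζ : 𝕜 => (C + ζ • D) i j :=
    differentiable_entry_add_smul
  have hsub : ∀ D : Matrix n n 𝕜, ∀ i j, Differentiable 𝕜 fun ζ : 𝕜 => (1 - ζ • D) i j :=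
    fun D i j => by simp
  exact differentiable_entry_mul
    (differentiable_entry_mul (differentiable_entry_mul (haff 1 Y₁) (haff 1 Y₂)) (haff A X))
    (differentiable_entry_mul (hsub Y₂) (hsub Y₁)) i j

theorem hasDerivAt_entry_conjCurve (Y₁ Y₂ A X : Matrix n n 𝕜) (i j : n) :
    HasDerivAt (fun ζ => conjCurve Y₁ Y₂ A X ζ i j)
      ((X + (Y₁ + Y₂) * A - A * (Y₁ + Y₂)) i j) 0 := by
  have haff : ∀ C D : Matrix n n 𝕜, ∀ i j,
      HasDerivAt (fun ζ : 𝕜 => (C + ζ • D) i j) (D i j) 0 :=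
    fun C D => hasDerivAt_entry_add_smul C D 0
  have hsub : ∀ D : Matrix n n 𝕜, ∀ i j,
      HasDerivAt (fun ζ : 𝕜 => (1 - ζ • D) i j) ((-D) i j) 0 := by
    intro D i j
    simpa [sub_eq_add_neg] using haff 1 (-D) i j
  have hprod := hasDerivAt_entry_mul
    (hasDerivAt_entry_mul (hasDerivAt_entry_mul (haff 1 Y₁) (haff 1 Y₂)) (haff A X))
    (hasDerivAt_entry_mul (hsub Y₂) (hsub Y₁)) i j
  unfold conjCurve
  convert hprod using 2
  simp only [zero_smul, add_zero, sub_zero, mul_one, one_mul]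
  noncomm_ring

end ConjugationCurve

section DiagonalZeroZeroT

variable {K : Type*} [Field K]

theorem spectrum_nilpotentBlock_subset {a b c d : K} (htr : a + d = 0)
    (hdet : a * d - b * c = 0) (t : K) : spectrum K !![a, b, 0; c, d, 0; 0, 0, t] ⊆ {0, t} := by
  intro μ hμ
  rw [spectrum.mem_iff, isUnit_iff_isUnit_det, isUnit_iff_ne_zero, not_not,
    algebraMap_eq_diagonal, det_fin_three] at hμ
  simp only [Matrix.sub_apply, diagonal_apply_eq, Pi.algebraMap_apply, Algebra.algebraMap_self,
    RingHom.id_apply, of_apply, cons_val', cons_val_zero, cons_val_fin_one, cons_val_one, cons_val,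
    ne_eq, Fin.reduceEq, not_false_eq_true, diagonal_apply_ne, sub_zero, zero_sub] at hμ
  have hμ' : μ ^ 2 * (μ - t) = 0 := by
    linear_combination hμ + (μ - t) * μ * htr - (μ - t) * hdet
  rcases mul_eq_zero.1 hμ' with h | h
  · exact .inl (pow_eq_zero_iff two_ne_zero |>.1 h)
  · exact .inr (sub_eq_zero.1 h)

def upperLeftBlock (B : Matrix (Fin 3) (Fin 3) K) : Matrix (Fin 3) (Fin 3) K :=
  !![B 0 0, B 0 1, 0; B 1 0, B 1 1, 0; 0, 0, 0]

def lastColumnCorrection (t : K) (B : Matrix (Fin 3) (Fin 3) K) : Matrix (Fin 3) (Fin 3) K :=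
  !![0, 0, B 0 2 / t; 0, 0, B 1 2 / t; 0, 0, 0]

def lastRowCorrection (t : K) (B : Matrix (Fin 3) (Fin 3) K) : Matrix (Fin 3) (Fin 3) K :=
  !![0, 0, 0; 0, 0, 0; -B 2 0 / t, -B 2 1 / t, 0]

theorem lastColumnCorrection_mul_self (t : K) (B : Matrix (Fin 3) (Fin 3) K) :
    lastColumnCorrection t B * lastColumnCorrection t B = 0 := by
  ext i j
  fin_cases i <;> fin_cases j <;> simp [lastColumnCorrection, mul_apply, Fin.sum_univ_three]

theorem lastRowCorrection_mul_self (t : K) (B : Matrix (Fin 3) (Fin 3) K) :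
    lastRowCorrection t B * lastRowCorrection t B = 0 := by
  ext i j
  fin_cases i <;> fin_cases j <;> simp [lastRowCorrection, mul_apply, Fin.sum_univ_three]

theorem diagonal_add_smul_upperLeftBlock (t ζ : K) (B : Matrix (Fin 3) (Fin 3) K) :
    diagonal ![0, 0, t] + ζ • upperLeftBlock B =
      !![ζ * B 0 0, ζ * B 0 1, 0; ζ * B 1 0, ζ * B 1 1, 0; 0, 0, t] := by
  ext i j
  fin_cases i <;> fin_cases j <;> simp [upperLeftBlock]

theorem upperLeftBlock_add_commutator {t : K} (ht : t ≠ 0) {B : Matrix (Fin 3) (Fin 3) K}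
    (hB : B 2 2 = 0) :
    upperLeftBlock B + (lastColumnCorrection t B + lastRowCorrection t B) * diagonal ![0, 0, t] -
      diagonal ![0, 0, t] * (lastColumnCorrection t B + lastRowCorrection t B) = B := by
  ext i j
  simp only [Matrix.sub_apply, Matrix.add_apply, mul_diagonal, diagonal_mul]
  fin_cases i <;> fin_cases j <;>
    simp [upperLeftBlock, lastColumnCorrection, lastRowCorrection, neg_div,
      mul_div_cancel₀ _ ht, div_mul_cancel₀ _ ht, hB]

end DiagonalZeroZeroT

theorem entire_curve_through_diag00t (t : ℂ) (ht0 : t ≠ 0) (ht : ‖t‖ < 1)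
    (At : Matrix (Fin 3) (Fin 3) ℂ) (hAt : At = Matrix.diagonal ![0, 0, t])
    (B : Matrix (Fin 3) (Fin 3) ℂ)
    (hB33 : B 2 2 = 0) (hBtr : B 0 0 + B 1 1 = 0)
    (hBdet : B 0 0 ^ 2 + B 0 1 * B 1 0 = 0) :
    ∃ φ : ℂ → Matrix (Fin 3) (Fin 3) ℂ,
      (∀ i j : Fin 3, Differentiable ℂ fun ζ => φ ζ i j) ∧
      (∀ ζ : ℂ, ∀ μ ∈ spectrum ℂ (φ ζ), ‖μ‖ < 1) ∧
      φ 0 = At ∧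
      (∀ i j : Fin 3, deriv (fun ζ => φ ζ i j) 0 = B i j) := by
  subst hAt
  refine ⟨conjCurve (lastColumnCorrection t B) (lastRowCorrection t B) (diagonal ![0, 0, t])
      (upperLeftBlock B), differentiable_entry_conjCurve _ _ _ _, fun ζ μ hμ => ?_,
    conjCurve_zero _ _ _ _, fun i j => ?_⟩
  · rw [spectrum_conjCurve (lastColumnCorrection_mul_self t B) (lastRowCorrection_mul_self t B),
      diagonal_add_smul_upperLeftBlock] at hμ
    have htr : ζ * B 0 0 + ζ * B 1 1 = 0 := by linear_combination ζ * hBtr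
    have hdet : ζ * B 0 0 * (ζ * B 1 1) - ζ * B 0 1 * (ζ * B 1 0) = 0 := by
      linear_combination ζ ^ 2 * B 0 0 * hBtr - ζ ^ 2 * hBdet
    rcases spectrum_nilpotentBlock_subset htr hdet t hμ with rfl | rfl
    · simp
    · exact ht
  · rw [(hasDerivAt_entry_conjCurve _ _ _ _ i j).deriv, upperLeftBlock_add_commutator ht0 hB33]
end

section
/- Let Ã ∈ M_3(ℂ) have ã_{23} = 1 and all other entries 0, and let X̃ = diag(1,−1,0). There is no entire holomorphic map φ : ℂ → Ω_3 with φ(0) = Ã and φ′(0) = X̃. More precisely, the Kobayashi–Royden pseudometric satisfies k_{Ω_3}(Ã; X̃) ≥ min_{s∈ℂ} max{ (|s−1|/3)^{1/2}, |s|^{1/3} } > 0. -/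
/-!
Near `ζ = 0` a disc `φ` with `φ 0 = Ã` and `α φ'(0) = X̃` can be written
`φ ζ = ζ • D⁻¹ N(ζ) D` with `D = diag(1, ζ, 1)` and `N` holomorphic: the entries `(1,2)` and
`(3,2)` vanish to second order and all others except `(2,1)`, `(2,3)` to first order. Hence
`det φ = ζ³ det N` and `σ₂ φ = ζ² σ₂ N`, where `σ₂` is the coefficient of `X` in the
characteristic polynomial. Eigenvalues in the unit disc give `|det φ| ≤ 1` and `|σ₂ φ| ≤ 3`, so by
the maximum principle the same bounds hold for `N 0`. The 1-jet forces
`α² σ₂ (N 0) = α³ det (N 0) - 1`, so `s = α³ det (N 0)` satisfies `|s| ≤ |α|³` and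
`|s - 1| ≤ 3 |α|²`. An entire curve restricts to such discs with `|α|` arbitrarily small.
-/

open Polynomial Metric Filter Topology

theorem Matrix.norm_charpoly_coeff_le_choose {n : Type*} [Fintype n] [DecidableEq n]
    (M : Matrix n n ℂ) (hM : ∀ μ ∈ spectrum ℂ M, ‖μ‖ ≤ 1) (k : ℕ) :
    ‖M.charpoly.coeff k‖ ≤ (Fintype.card n).choose k := by
  have hmahler : M.charpoly.mahlerMeasure = 1 := by
    rw [mahlerMeasure_eq_leadingCoeff_mul_prod_roots, M.charpoly_monic.leadingCoeff, norm_one,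
      one_mul]
    refine Multiset.prod_eq_one fun x hx => ?_
    obtain ⟨μ, hμ, rfl⟩ := Multiset.mem_map.mp hx
    exact max_eq_left (hM μ (Matrix.mem_spectrum_of_isRoot_charpoly (isRoot_of_mem_roots hμ)))
  simpa [hmahler, Matrix.charpoly_natDegree_eq_dim] using
    norm_coeff_le_choose_mul_mahlerMeasure k M.charpoly

theorem Matrix.charpoly_coeff_one_fin_three (M : Matrix (Fin 3) (Fin 3) ℂ) :
    M.charpoly.coeff 1 = M 0 0 * M 1 1 - M 0 1 * M 1 0 + (M 0 0 * M 2 2 - M 0 2 * M 2 0)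
      + (M 1 1 * M 2 2 - M 1 2 * M 2 1) := by
  have : M.charpoly = X ^ 3 - C M.trace * X ^ 2 + C (M 0 0 * M 1 1 - M 0 1 * M 1 0
      + (M 0 0 * M 2 2 - M 0 2 * M 2 0) + (M 1 1 * M 2 2 - M 1 2 * M 2 1)) * X - C M.det := by
    rw [Matrix.charpoly, Matrix.det_fin_three]
    simp only [charmatrix_apply, Matrix.diagonal_apply, Fin.ext_iff, Matrix.trace_fin_three,
      Matrix.det_fin_three, map_add, map_mul, map_sub]
    norm_num
    ring
  rw [this]
  simp [coeff_X_pow]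

theorem Matrix.norm_det_le_one_of_spectrum {n : Type*} [Fintype n] [DecidableEq n]
    (M : Matrix n n ℂ) (hM : ∀ μ ∈ spectrum ℂ M, ‖μ‖ ≤ 1) : ‖M.det‖ ≤ 1 := by
  simpa [Matrix.det_eq_sign_charpoly_coeff] using M.norm_charpoly_coeff_le_choose hM 0

theorem Complex.norm_le_of_forall_norm_pow_smul_le {E : Type*} [NormedAddCommGroup E]
    [NormedSpace ℂ E] {g : ℂ → E} {k : ℕ} {M : ℝ} (hg : DifferentiableOn ℂ g (ball 0 1))
    (hM : ∀ z ∈ ball (0 : ℂ) 1, ‖z ^ k • g z‖ ≤ M) : ‖g 0‖ ≤ M := by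
  suffices ∀ᶠ r in 𝓝[<] (1 : ℝ), ‖g 0‖ ≤ M / r ^ k by
    refine ge_of_tendsto ?_ this
    have : ContinuousAt (fun r : ℝ => M / r ^ k) 1 := by fun_prop (disch := norm_num)
    simpa using this.tendsto.mono_left nhdsWithin_le_nhds
  filter_upwards [Ioo_mem_nhdsLT one_pos] with r ⟨hr0, hr1⟩
  refine Complex.norm_le_of_forall_mem_frontier_norm_le isBounded_ball
    (hg.diffContOnCl_ball (closedBall_subset_ball hr1)) (fun z hz => ?_)
    (subset_closure (mem_ball_self hr0))
  rw [frontier_ball 0 hr0.ne', mem_sphere_zero_iff_norm] at hz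
  have := hM z (mem_ball_zero_iff.mpr (hz.trans_lt hr1))
  rw [norm_smul, norm_pow, hz] at this
  rw [le_div_iff₀ (by positivity), mul_comm]
  exact this

section Dslope

variable {𝕜 E : Type*} [NontriviallyNormedField 𝕜] [NormedAddCommGroup E] [NormedSpace 𝕜 E]
  {f : 𝕜 → E}

theorem eq_smul_dslope_of_apply_zero (hf : f 0 = 0) (z : 𝕜) : f z = z • dslope f 0 z := by
  simpa [hf] using (sub_smul_dslope f 0 z).symm

theorem eq_sq_smul_dslope_dslope (hf : f 0 = 0) (hf' : deriv f 0 = 0) (z : 𝕜) :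
    f z = z ^ 2 • dslope (dslope f 0) 0 z := by
  rw [eq_smul_dslope_of_apply_zero hf z,
    eq_smul_dslope_of_apply_zero (f := dslope f 0) (by rw [dslope_same, hf']) z, smul_smul, sq]

end Dslope

/-- For `t ≠ 0` this is `t • D⁻¹ N D` with `D = diag(1, t, 1)`, but it stays polynomial in `t`. -/
def twistedScale (t : ℂ) (N : Matrix (Fin 3) (Fin 3) ℂ) : Matrix (Fin 3) (Fin 3) ℂ :=
  !![t * N 0 0, t ^ 2 * N 0 1, t * N 0 2; N 1 0, t * N 1 1, N 1 2;
    t * N 2 0, t ^ 2 * N 2 1, t * N 2 2]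

theorem det_twistedScale (t : ℂ) (N : Matrix (Fin 3) (Fin 3) ℂ) :
    (twistedScale t N).det = t ^ 3 * N.det := by
  simp only [twistedScale, Matrix.det_fin_three, Matrix.of_apply, Matrix.cons_val',
    Matrix.cons_val_zero, Matrix.cons_val_one, Matrix.cons_val_two, Matrix.empty_val',
    Matrix.cons_val_fin_one, Matrix.head_cons, Matrix.tail_cons, Matrix.head_fin_const]
  ring

theorem charpoly_coeff_one_twistedScale (t : ℂ) (N : Matrix (Fin 3) (Fin 3) ℂ) :
    (twistedScale t N).charpoly.coeff 1 = t ^ 2 * N.charpoly.coeff 1 := by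
  simp only [Matrix.charpoly_coeff_one_fin_three, twistedScale, Matrix.of_apply, Matrix.cons_val',
    Matrix.cons_val_zero, Matrix.cons_val_one, Matrix.cons_val_two, Matrix.empty_val',
    Matrix.cons_val_fin_one, Matrix.head_cons, Matrix.tail_cons, Matrix.head_fin_const]
  ring

theorem DifferentiableOn.det_fin_three {U : Set ℂ} {N : ℂ → Matrix (Fin 3) (Fin 3) ℂ}
    (hN : ∀ i j, DifferentiableOn ℂ (fun ζ => N ζ i j) U) :
    DifferentiableOn ℂ (fun ζ => (N ζ).det) U := by
  simp only [Matrix.det_fin_three]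
  fun_prop

theorem DifferentiableOn.charpoly_coeff_one_fin_three {U : Set ℂ}
    {N : ℂ → Matrix (Fin 3) (Fin 3) ℂ} (hN : ∀ i j, DifferentiableOn ℂ (fun ζ => N ζ i j) U) :
    DifferentiableOn ℂ (fun ζ => (N ζ).charpoly.coeff 1) U := by
  simp only [Matrix.charpoly_coeff_one_fin_three]
  fun_prop

theorem exists_twistedScale_of_jet {U : Set ℂ} (hU : U ∈ 𝓝 0) {α : ℂ}
    {φ : ℂ → Matrix (Fin 3) (Fin 3) ℂ} (hφ : ∀ i j, DifferentiableOn ℂ (fun ζ => φ ζ i j) U)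
    (h0 : φ 0 = !![0, 0, 0; 0, 0, 1; 0, 0, 0])
    (hd : ∀ i j, α * deriv (fun ζ => φ ζ i j) 0 = !![1, 0, 0; 0, -1, 0; 0, 0, 0] i j) :
    ∃ N : ℂ → Matrix (Fin 3) (Fin 3) ℂ, (∀ i j, DifferentiableOn ℂ (fun ζ => N ζ i j) U) ∧
      (∀ ζ, φ ζ = twistedScale ζ (N ζ)) ∧
      α ^ 2 * (N 0).charpoly.coeff 1 = α ^ 3 * (N 0).det - 1 := by
  set f : Fin 3 → Fin 3 → ℂ → ℂ := fun i j ζ => φ ζ i j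
  have hf0 : ∀ i j, f i j 0 = !![0, 0, 0; 0, 0, 1; 0, 0, 0] i j := fun i j => by simp [f, h0]
  have hslope : ∀ i j, DifferentiableOn ℂ (dslope (f i j) 0) U := fun i j =>
    (Complex.differentiableOn_dslope hU).mpr (hφ i j)
  let N : ℂ → Matrix (Fin 3) (Fin 3) ℂ := fun ζ =>
    !![dslope (f 0 0) 0 ζ, dslope (dslope (f 0 1) 0) 0 ζ, dslope (f 0 2) 0 ζ;
      f 1 0 ζ, dslope (f 1 1) 0 ζ, f 1 2 ζ;
      dslope (f 2 0) 0 ζ, dslope (dslope (f 2 1) 0) 0 ζ, dslope (f 2 2) 0 ζ]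
  have hα : α ≠ 0 := left_ne_zero_of_mul_eq_one (by simpa using hd 0 0)
  have hderiv : ∀ i j, deriv (f i j) 0 = α⁻¹ * !![1, 0, 0; 0, -1, 0; 0, 0, 0] i j :=
    fun i j => by rw [← hd i j, inv_mul_cancel_left₀ hα]
  refine ⟨N, fun i j => ?_, fun ζ => ?_, ?_⟩
  · fin_cases i <;> fin_cases j
    all_goals first
      | exact hφ _ _
      | exact hslope _ _
      | exact (Complex.differentiableOn_dslope hU).mpr (hslope _ _)
  · ext i j
    fin_cases i <;> fin_cases j <;> simp [twistedScale, N]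
    all_goals first
      | rfl
      | exact eq_smul_dslope_of_apply_zero (f := f _ _) (by simp [hf0]) ζ
      | exact eq_sq_smul_dslope_dslope (f := f _ _) (by simp [hf0]) (by simp [hderiv]) ζ
  · simp [N, dslope_same, hderiv, hf0, Matrix.det_fin_three, Matrix.charpoly_coeff_one_fin_three]
    field_simp
    ring

theorem exists_jet_bounds {α : ℂ} {φ : ℂ → Matrix (Fin 3) (Fin 3) ℂ}
    (hφ : ∀ i j, DifferentiableOn ℂ (fun ζ => φ ζ i j) (ball 0 1))
    (hspec : ∀ ζ ∈ ball (0 : ℂ) 1, ∀ μ ∈ spectrum ℂ (φ ζ), ‖μ‖ ≤ 1)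
    (h0 : φ 0 = !![0, 0, 0; 0, 0, 1; 0, 0, 0])
    (hd : ∀ i j, α * deriv (fun ζ => φ ζ i j) 0 = !![1, 0, 0; 0, -1, 0; 0, 0, 0] i j) :
    ∃ s : ℂ, ‖s - 1‖ ≤ 3 * ‖α‖ ^ 2 ∧ ‖s‖ ≤ ‖α‖ ^ 3 := by
  obtain ⟨N, hN, hφN, hjet⟩ := exists_twistedScale_of_jet (ball_mem_nhds 0 one_pos) hφ h0 hd
  have hdet : ‖(N 0).det‖ ≤ 1 :=
    Complex.norm_le_of_forall_norm_pow_smul_le (DifferentiableOn.det_fin_three hN) fun z hz => by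
      simpa [hφN, det_twistedScale] using (φ z).norm_det_le_one_of_spectrum (hspec z hz)
  have hcoeff : ‖(N 0).charpoly.coeff 1‖ ≤ 3 :=
    Complex.norm_le_of_forall_norm_pow_smul_le
      (DifferentiableOn.charpoly_coeff_one_fin_three hN) fun z hz => by
        simpa [hφN, charpoly_coeff_one_twistedScale] using
          (φ z).norm_charpoly_coeff_le_choose (hspec z hz) 1
  refine ⟨α ^ 3 * (N 0).det, ?_, ?_⟩
  · rw [← hjet, norm_mul, norm_pow, mul_comm 3]
    gcongr
  · rw [norm_mul, norm_pow]
    exact mul_le_of_le_one_right (by positivity) hdet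

noncomputable def jetBound (s : ℂ) : ℝ := max (√(‖s - 1‖ / 3)) (‖s‖ ^ ((1 : ℝ) / 3))

theorem half_le_jetBound (s : ℂ) : 1 / 2 ≤ jetBound s := by
  by_contra! h
  obtain ⟨h1, h2⟩ := max_lt_iff.mp h
  rw [Real.sqrt_lt' one_half_pos] at h1
  rw [one_div, Real.rpow_inv_lt_iff_of_pos (norm_nonneg s) one_half_pos.le three_pos] at h2
  have : ‖(1 : ℂ)‖ ≤ ‖s‖ + ‖s - 1‖ := by simpa using norm_sub_le s (s - 1)
  norm_num at h1 h2 this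
  linarith

theorem jetBound_le {s : ℂ} {r : ℝ} (hr : 0 ≤ r) (h1 : ‖s - 1‖ ≤ 3 * r ^ 2) (h2 : ‖s‖ ≤ r ^ 3) :
    jetBound s ≤ r := by
  refine max_le ((Real.sqrt_le_left hr).mpr (by linarith)) ?_
  rw [one_div, Real.rpow_inv_le_iff_of_pos (norm_nonneg s) hr three_pos]
  exact_mod_cast h2

theorem sInf_jetBound_pos : 0 < sInf {x : ℝ | ∃ s : ℂ, x = jetBound s} := by
  refine one_half_pos.trans_le (le_csInf ⟨_, 0, rfl⟩ ?_)
  rintro _ ⟨s, rfl⟩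
  exact half_le_jetBound s

theorem sInf_jetBound_le {s : ℂ} {r : ℝ} (hr : 0 ≤ r) (h1 : ‖s - 1‖ ≤ 3 * r ^ 2)
    (h2 : ‖s‖ ≤ r ^ 3) : sInf {x : ℝ | ∃ s : ℂ, x = jetBound s} ≤ r := by
  refine le_trans (csInf_le ⟨0, ?_⟩ ⟨s, rfl⟩) (jetBound_le hr h1 h2)
  rintro _ ⟨t, rfl⟩
  exact one_half_pos.le.trans (half_le_jetBound t)

theorem sInf_jetBound_nonpos_of_entire {φ : ℂ → Matrix (Fin 3) (Fin 3) ℂ}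
    (hφ : ∀ i j, Differentiable ℂ fun ζ => φ ζ i j)
    (hspec : ∀ ζ, ∀ μ ∈ spectrum ℂ (φ ζ), ‖μ‖ ≤ 1)
    (h0 : φ 0 = !![0, 0, 0; 0, 0, 1; 0, 0, 0])
    (hd : ∀ i j, deriv (fun ζ => φ ζ i j) 0 = !![1, 0, 0; 0, -1, 0; 0, 0, 0] i j) :
    sInf {x : ℝ | ∃ s : ℂ, x = jetBound s} ≤ 0 := by
  refine le_of_forall_gt_imp_ge_of_dense fun ε hε => ?_
  have hε' : (ε : ℂ) ≠ 0 := by exact_mod_cast hε.ne'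
  obtain ⟨s, hs1, hs⟩ := exists_jet_bounds (α := ε) (φ := fun ζ => φ ((ε : ℂ)⁻¹ * ζ))
    (fun i j => ((hφ i j).comp (differentiable_id.const_mul _)).differentiableOn)
    (fun ζ _ => hspec _) (by simp [h0]) fun i j => by
      rw [deriv_comp_mul_left _ (fun w => φ w i j), mul_zero, hd, smul_eq_mul,
        mul_inv_cancel_left₀ hε']
  simpa [abs_of_pos hε] using sInf_jetBound_le (norm_nonneg _) hs1 hs

theorem kobayashi_positive_at_E23 (Atil Xtil : Matrix (Fin 3) (Fin 3) ℂ)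
    (hA : Atil = !![0, 0, 0; 0, 0, 1; 0, 0, 0])
    (hX : Xtil = !![1, 0, 0; 0, -1, 0; 0, 0, 0]) :
    -- no entire curve in the spectral ball with this 1-jet
    (¬ ∃ φ : ℂ → Matrix (Fin 3) (Fin 3) ℂ,
        (∀ i j : Fin 3, Differentiable ℂ fun ζ => φ ζ i j) ∧
        (∀ ζ : ℂ, ∀ μ ∈ spectrum ℂ (φ ζ), ‖μ‖ < 1) ∧
        φ 0 = Atil ∧
        (∀ i j : Fin 3, deriv (fun ζ => φ ζ i j) 0 = Xtil i j)) ∧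
    -- the lower bound min_{s ∈ ℂ} max{(|s−1|/3)^{1/2}, |s|^{1/3}} is positive
    0 < sInf {x : ℝ | ∃ s : ℂ,
        x = max (Real.sqrt (‖s - 1‖ / 3)) (‖s‖ ^ ((1 : ℝ) / 3))} ∧
    -- and it bounds from below the Kobayashi–Royden pseudometric of the spectral ball
    ∀ r : ℝ, (∃ α : ℂ, ‖α‖ = r ∧
        ∃ φ : ℂ → Matrix (Fin 3) (Fin 3) ℂ,
          (∀ i j : Fin 3, DifferentiableOn ℂ (fun ζ => φ ζ i j) (Metric.ball 0 1)) ∧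
          (∀ ζ ∈ Metric.ball (0 : ℂ) 1, ∀ μ ∈ spectrum ℂ (φ ζ), ‖μ‖ < 1) ∧
          φ 0 = Atil ∧
          (∀ i j : Fin 3, α * deriv (fun ζ => φ ζ i j) 0 = Xtil i j)) →
      sInf {x : ℝ | ∃ s : ℂ,
        x = max (Real.sqrt (‖s - 1‖ / 3)) (‖s‖ ^ ((1 : ℝ) / 3))} ≤ r := by
  subst hA hX
  refine ⟨fun ⟨φ, hφ, hspec, h0, hd⟩ => ?_, sInf_jetBound_pos, ?_⟩
  · exact sInf_jetBound_pos.not_ge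
      (sInf_jetBound_nonpos_of_entire hφ (fun ζ μ hμ => (hspec ζ μ hμ).le) h0 hd)
  · rintro r ⟨α, rfl, φ, hφ, hspec, h0, hd⟩
    obtain ⟨s, hs1, hs⟩ := exists_jet_bounds hφ (fun ζ hζ μ hμ => (hspec ζ hζ μ hμ).le) h0 hd
    exact sInf_jetBound_le (norm_nonneg α) hs1 hs
end

section
/- Let r > 0, m ∈ ℕ, and P : r𝔻 → GL_n(ℂ) holomorphic. Then there exists an entire map P̃ : ℂ → GL_n(ℂ) of the form P̃(ζ) = P(0)exp(P_1(ζ)) with P_1 a matrix-valued polynomial, P_1(0) = 0, such that P̃(ζ) = P(ζ) + o(ζ^m) and P̃(ζ)^{−1} = P(ζ)^{−1} + o(ζ^m) as ζ → 0. In particular P̃(ζ) is invertible for every ζ ∈ ℂ. -/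
/-!
Write `P = P(0) Q` with `Q(0) = 1`. Near `1` the exponential of the Banach algebra has an
analytic local inverse (analytic inverse function theorem), so `Q = exp L` near `0` with `L`
analytic and `L(0) = 0`. Let `P₁` be the Taylor polynomial of `L` of degree `m`; then
`L - P₁ = O(|ζ|^(m+1))`. Since `exp` is locally Lipschitz at `0`, both `exp P₁ - exp L` and
`exp (-P₁) - exp (-L)` are `o(ζ^m)`, and multiplying by `P(0)` on the left, respectively by
`P(0)⁻¹` on the right, gives the two estimates.
-/

open Filter Topology

theorem HasStrictFDerivAt.analyticAt_localInverse {𝕜 E F : Type*} [NontriviallyNormedField 𝕜]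
    [NormedAddCommGroup E] [NormedSpace 𝕜 E] [CompleteSpace E]
    [NormedAddCommGroup F] [NormedSpace 𝕜 F] {f : E → F} {f' : E ≃L[𝕜] F} {a : E}
    (hf : HasStrictFDerivAt f (f' : E →L[𝕜] F) a) (ha : AnalyticAt 𝕜 f a) :
    AnalyticAt 𝕜 (hf.localInverse f f' a) (f a) := by
  obtain ⟨p, hp⟩ := ha
  have hp1 : continuousMultilinearCurryFin1 𝕜 E F (p 1) = f' :=
    hp.hasStrictFDerivAt.hasFDerivAt.unique hf.hasFDerivAt
  exact (hf.toOpenPartialHomeomorph f).hasFPowerSeriesAt_symm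
    hf.mem_toOpenPartialHomeomorph_source hp
    (by rw [← hp1, LinearIsometryEquiv.symm_apply_apply]) |>.analyticAt

theorem HasFPowerSeriesAt.isLittleO_sub_sum_pow_smul_coeff {𝕜 E : Type*}
    [NontriviallyNormedField 𝕜] [NormedAddCommGroup E] [NormedSpace 𝕜 E] {f : 𝕜 → E}
    {p : FormalMultilinearSeries 𝕜 𝕜 E} (hf : HasFPowerSeriesAt f p 0) (m : ℕ) :
    (fun z => f z - ∑ k ∈ Finset.range (m + 1), z ^ k • p.coeff k) =o[𝓝 0] (· ^ m) := by
  have hO : (fun z => f z - ∑ k ∈ Finset.range (m + 1), z ^ k • p.coeff k)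
      =O[𝓝 0] fun z => ‖z‖ ^ (m + 1) := by
    simpa [FormalMultilinearSeries.partialSum] using hf.isBigO_sub_partialSum_pow (m + 1)
  refine hO.trans_isLittleO ?_
  simpa only [norm_pow] using (Asymptotics.isLittleO_pow_pow (𝕜 := 𝕜) m.lt_succ_self).norm_left

theorem sum_Icc_one_zero_pow_smul {R M : Type*} [MonoidWithZero R] [AddCommMonoid M]
    [MulActionWithZero R M] (C : ℕ → M) (m : ℕ) : ∑ k ∈ Finset.Icc 1 m, (0 : R) ^ k • C k = 0 :=
  Finset.sum_eq_zero fun k hk => by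
    rw [zero_pow (Nat.one_le_iff_ne_zero.1 (Finset.mem_Icc.1 hk).1), zero_smul]

theorem tendsto_sum_Icc_one_pow_smul_nhds_zero {𝕜 E : Type*} [NormedField 𝕜]
    [NormedAddCommGroup E] [NormedSpace 𝕜 E] (C : ℕ → E) (m : ℕ) :
    Tendsto (fun z : 𝕜 => ∑ k ∈ Finset.Icc 1 m, z ^ k • C k) (𝓝 0) (𝓝 0) := by
  have hcont : Continuous fun z : 𝕜 => ∑ k ∈ Finset.Icc 1 m, z ^ k • C k := by fun_prop
  simpa only [sum_Icc_one_zero_pow_smul] using hcont.tendsto 0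

namespace NormedSpace

theorem exists_analyticAt_local_log (𝕂 A : Type*) [RCLike 𝕂] [NormedRing A]
    [NormedAlgebra 𝕂 A] [CompleteSpace A] :
    ∃ log : A → A, AnalyticAt 𝕂 log 1 ∧ log 1 = 0 ∧ ∀ᶠ y in 𝓝 1, exp (log y) = y := by
  have hexp : HasStrictFDerivAt exp
      ((ContinuousLinearEquiv.refl 𝕂 A : A ≃L[𝕂] A) : A →L[𝕂] A) 0 :=
    hasStrictFDerivAt_exp_zero
  have hexp0 : exp (0 : A) = 1 := exp_zero
  refine ⟨hexp.localInverse exp _ 0, ?_, ?_, ?_⟩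
  · simpa [hexp0] using hexp.analyticAt_localInverse (exp_analytic 0)
  · simpa [hexp0] using hexp.localInverse_apply_image
  · simpa [hexp0] using hexp.eventually_right_inverse

theorem isLittleO_exp_sub_exp (𝕂 : Type*) {A α F : Type*} [RCLike 𝕂] [NormedRing A]
    [NormedAlgebra 𝕂 A] [CompleteSpace A] [Norm F] {l : Filter α} {a b : α → A} {g : α → F}
    (ha : Tendsto a l (𝓝 0)) (hb : Tendsto b l (𝓝 0)) (hab : (fun x => a x - b x) =o[l] g) :
    (fun x => exp (a x) - exp (b x)) =o[l] g := by
  have hexp : HasStrictFDerivAt (exp : A → A) (1 : A →L[𝕂] A) 0 := hasStrictFDerivAt_exp_zero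
  exact (hexp.isBigO_sub.comp_tendsto (by simpa [nhds_prod_eq] using ha.prodMk hb)).trans_isLittleO
    hab

end NormedSpace

namespace AnalyticAt

open NormedSpace

variable {𝕂 A : Type*} [RCLike 𝕂] [NormedRing A] [NormedAlgebra 𝕂 A] [CompleteSpace A]

theorem exists_analyticAt_exp_eq {E : Type*} [NormedAddCommGroup E] [NormedSpace 𝕂 E]
    {Q : E → A} {x : E} (hQ : AnalyticAt 𝕂 Q x) (hQx : Q x = 1) :
    ∃ L : E → A, AnalyticAt 𝕂 L x ∧ L x = 0 ∧ ∀ᶠ y in 𝓝 x, exp (L y) = Q y := by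
  obtain ⟨log, hlog, hlog1, hexp_log⟩ := exists_analyticAt_local_log 𝕂 A
  refine ⟨log ∘ Q, (hQx ▸ hlog).comp hQ, by simp [hQx, hlog1], ?_⟩
  exact (hQx ▸ hQ.continuousAt.tendsto).eventually hexp_log

theorem exists_exp_polynomial_isLittleO {P : 𝕂 → A} (hP : AnalyticAt 𝕂 P 0)
    (hP0 : IsUnit (P 0)) (m : ℕ) :
    ∃ C : ℕ → A,
      (fun z => P 0 * exp (∑ k ∈ Finset.Icc 1 m, z ^ k • C k) - P z) =o[𝓝 0] (· ^ m) ∧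
      (fun z => Ring.inverse (P 0 * exp (∑ k ∈ Finset.Icc 1 m, z ^ k • C k)) - Ring.inverse (P z))
        =o[𝓝 0] (· ^ m) := by
  have hQ : AnalyticAt 𝕂 (fun z => Ring.inverse (P 0) * P z) 0 := analyticAt_const.mul hP
  obtain ⟨L, ⟨p, hp⟩, hL0, hexpL⟩ := hQ.exists_analyticAt_exp_eq (Ring.inverse_mul_cancel _ hP0)
  set T : 𝕂 → A := fun z => ∑ k ∈ Finset.Icc 1 m, z ^ k • p.coeff k
  have hLT : (fun z => L z - T z) =o[𝓝 0] (· ^ m) := by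
    have hcoeff0 : p.coeff 0 = 0 := by simpa [hL0] using hp.coeff_zero fun _ => 1
    refine (hp.isLittleO_sub_sum_pow_smul_coeff m).congr_left fun z => ?_
    rw [Finset.range_eq_Ico, Finset.sum_eq_sum_Ico_succ_bot m.succ_pos, hcoeff0, smul_zero,
      zero_add]
    rfl
  have hT : Tendsto T (𝓝 0) (𝓝 0) := tendsto_sum_Icc_one_pow_smul_nhds_zero _ m
  have hL : Tendsto L (𝓝 0) (𝓝 0) := hL0 ▸ hp.continuousAt.tendsto
  have hP_eq : ∀ᶠ z in 𝓝 0, P z = P 0 * exp (L z) := by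
    filter_upwards [hexpL] with z hz
    rw [hz, ← mul_assoc, Ring.mul_inverse_cancel _ hP0, one_mul]
  refine ⟨p.coeff, ?_, ?_⟩
  · refine ((isLittleO_exp_sub_exp 𝕂 hT hL hLT.symm).const_mul_left (P 0)).congr' ?_ .rfl
    filter_upwards [hP_eq] with z hz
    rw [hz, mul_sub]
  · have hneg : (fun z => exp (-T z) - exp (-L z)) =o[𝓝 0] (· ^ m) :=
      isLittleO_exp_sub_exp 𝕂 (by simpa using hT.neg) (by simpa using hL.neg)
        (by simpa [neg_add_eq_sub] using hLT)
    refine ((ContinuousLinearMap.mul 𝕂 A).flip (Ring.inverse (P 0)) |>.isBigO_comp _ _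
      |>.trans_isLittleO hneg).congr' ?_ .rfl
    let _ : NormedAlgebra ℚ A := NormedAlgebra.restrictScalars ℚ 𝕂 A
    filter_upwards [hP_eq] with z hz
    rw [hz, Ring.inverse_mul (.inl hP0), Ring.inverse_mul (.inl hP0), Ring.inverse_exp,
      Ring.inverse_exp, ← sub_mul]
    rfl

end AnalyticAt

section MatrixEntries

attribute [local instance] Matrix.linftyOpNormedAddCommGroup Matrix.linftyOpNormedSpace

variable {𝕜 m n : Type*} [NontriviallyNormedField 𝕜] [CompleteSpace 𝕜] [Fintype m] [Fintype n]

theorem Matrix.differentiableOn_iff {E : Type*} [NormedAddCommGroup E] [NormedSpace 𝕜 E]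
    {f : E → Matrix m n 𝕜} {s : Set E} :
    DifferentiableOn 𝕜 f s ↔ ∀ i j, DifferentiableOn 𝕜 (fun x => f x i j) s := by
  let φ : Matrix m n 𝕜 ≃L[𝕜] (m → n → 𝕜) :=
    (Matrix.ofLinearEquiv 𝕜).symm.toContinuousLinearEquiv
  exact φ.comp_differentiableOn_iff.symm.trans
    (differentiableOn_pi.trans (forall_congr' fun i => differentiableOn_pi))

theorem Matrix.isLittleO_entry {α F : Type*} [Norm F] {l : Filter α} {f : α → Matrix m n 𝕜}
    {g : α → F} (h : f =o[l] g) (i : m) (j : n) : (fun x => f x i j) =o[l] g :=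
  ((Matrix.entryLinearMap 𝕜 𝕜 i j).toContinuousLinearMap.isBigO_comp f l).trans_isLittleO h

end MatrixEntries

theorem entire_approximation_of_invertible_frame (n : ℕ) (r : ℝ) (hr : 0 < r) (m : ℕ)
    (P : ℂ → Matrix (Fin n) (Fin n) ℂ)
    (hP : ∀ i j : Fin n, DifferentiableOn ℂ (fun ζ => P ζ i j) (Metric.ball 0 r))
    (hPinv : ∀ ζ ∈ Metric.ball (0 : ℂ) r, IsUnit (P ζ)) :
    ∃ P1 : ℂ → Matrix (Fin n) (Fin n) ℂ,
      -- `P1` is a matrix-valued polynomial with `P1 0 = 0`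
      (∃ C : ℕ → Matrix (Fin n) (Fin n) ℂ,
        P1 = fun ζ => ∑ k ∈ Finset.Icc 1 m, ζ ^ k • C k) ∧
      P1 0 = 0 ∧
      -- `P̃(ζ) := P(0) exp (P1 ζ)` is entire with invertible values
      (∀ i j : Fin n,
        Differentiable ℂ fun ζ => (P 0 * NormedSpace.exp (P1 ζ)) i j) ∧
      (∀ ζ : ℂ, IsUnit (P 0 * NormedSpace.exp (P1 ζ))) ∧
      -- `P̃(ζ) = P(ζ) + o(ζ^m)`
      (∀ i j : Fin n,
        Tendsto (fun ζ : ℂ => ((P 0 * NormedSpace.exp (P1 ζ) - P ζ) i j) / ζ ^ m)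
          (nhdsWithin 0 {(0 : ℂ)}ᶜ) (nhds 0)) ∧
      -- `P̃(ζ)⁻¹ = P(ζ)⁻¹ + o(ζ^m)`
      (∀ i j : Fin n,
        Tendsto (fun ζ : ℂ => (((P 0 * NormedSpace.exp (P1 ζ))⁻¹ - (P ζ)⁻¹) i j) / ζ ^ m)
          (nhdsWithin 0 {(0 : ℂ)}ᶜ) (nhds 0)) := by
  let _ : NormedRing (Matrix (Fin n) (Fin n) ℂ) := Matrix.linftyOpNormedRing
  let _ : NormedAlgebra ℂ (Matrix (Fin n) (Fin n) ℂ) := Matrix.linftyOpNormedAlgebra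
  have hP0 : IsUnit (P 0) := hPinv 0 (Metric.mem_ball_self hr)
  have hPan : AnalyticAt ℂ P 0 :=
    (Matrix.differentiableOn_iff.2 hP).analyticAt (Metric.ball_mem_nhds 0 hr)
  obtain ⟨C, happrox, happrox_inv⟩ := hPan.exists_exp_polynomial_isLittleO hP0 m
  have hentire : Differentiable ℂ fun ζ : ℂ =>
      P 0 * NormedSpace.exp (∑ k ∈ Finset.Icc 1 m, ζ ^ k • C k) := by
    have hexp : Differentiable ℂ (NormedSpace.exp : Matrix (Fin n) (Fin n) ℂ → _) :=
      fun x => (NormedSpace.exp_analytic x).differentiableAt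
    exact (hexp.comp (by fun_prop)).const_mul _
  refine ⟨_, ⟨C, rfl⟩, sum_Icc_one_zero_pow_smul C m, fun i j => ?_,
    fun ζ => hP0.mul (Matrix.isUnit_exp _), fun i j => ?_, fun i j => ?_⟩
  · exact differentiableOn_univ.1 (Matrix.differentiableOn_iff.1 hentire.differentiableOn i j)
  · exact (Matrix.isLittleO_entry happrox i j).tendsto_div_nhds_zero.mono_left nhdsWithin_le_nhds
  · refine ((Matrix.isLittleO_entry happrox_inv i j).tendsto_div_nhds_zero.mono_left
      nhdsWithin_le_nhds).congr fun ζ => ?_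
    rw [Matrix.nonsing_inv_eq_ringInverse, Matrix.nonsing_inv_eq_ringInverse]
    -- the two sides differ only in the ring instance behind `Ring.inverse`
    rfl
end
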